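/- For the Jacobi operator J(X) of the curvature tensor R = R(R¹,R²) from Lemma 2.1 (with R² the constant curvature +1 tensor), and any spacelike unit vector X, one has J(X)³ = 0 and J(X)² ≠ 0. Hence R is nilpotent of order exactly 3 on spacelike vectors. -/

import Mathlib

open scoped BigOperators

/-- Basis of `ℝ^{3s}`: `(0, a) = U_a`, `(1, a) = V_a`, `(2, a) = T_a`. -/
abbrev BasisIdx (s : ℕ) := Fin 3 × Fin s

/-- The basis vectors `U_a`, `V_a`, `T_a` of `ℝ^{3s}`. -/
def Uvec {s : ℕ} (a : Fin s) : BasisIdx s → ℝ := Pi.single ((0 : Fin 3), a) 1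
def Vvec {s : ℕ} (a : Fin s) : BasisIdx s → ℝ := Pi.single ((1 : Fin 3), a) 1
def Tvec {s : ℕ} (a : Fin s) : BasisIdx s → ℝ := Pi.single ((2 : Fin 3), a) 1

/-- Components of the metric of Lemma 2.1: `g(U_a,U_b) = g_{ab}`,
`g(U_a,V_b) = g(V_b,U_a) = δ_{ab}`, `g(T_a,T_b) = -δ_{ab}`, all else zero. -/
def Gmat {s : ℕ} (gm : Fin s → Fin s → ℝ) : BasisIdx s → BasisIdx s → ℝ :=
  fun x y =>
    if x.1 = 0 ∧ y.1 = 0 then gm x.2 y.2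
    else if (x.1 = 0 ∧ y.1 = 1) ∨ (x.1 = 1 ∧ y.1 = 0) then (if x.2 = y.2 then 1 else 0)
    else if x.1 = 2 ∧ y.1 = 2 then (if x.2 = y.2 then (-1 : ℝ) else 0)
    else 0

/-- The bilinear form determined by the metric components. -/
def gBil {s : ℕ} (gm : Fin s → Fin s → ℝ) (X Y : BasisIdx s → ℝ) : ℝ :=
  ∑ p, ∑ q, X p * Gmat gm p q * Y q

/-- The quadrilinear extension of a component tensor to vectors. -/
def ext {s : ℕ} (F : BasisIdx s → BasisIdx s → BasisIdx s → BasisIdx s → ℝ)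
    (x y z w : BasisIdx s → ℝ) : ℝ :=
  ∑ p, ∑ q, ∑ r, ∑ t, x p * y q * z r * w t * F p q r t

/-- A (component-level) algebraic curvature tensor. -/
def IsACT {ι : Type*} (F : ι → ι → ι → ι → ℝ) : Prop :=
  (∀ x y z w, F x y z w = - F y x z w) ∧
  (∀ x y z w, F x y z w = F z w x y) ∧
  (∀ x y z w, F x y z w + F y z x w + F z x y w = 0)

/-- `R²_{abcd} = δ_{ad}δ_{bc} - δ_{ac}δ_{bd}`, constant sectional curvature `+1`. -/
def R2const (s : ℕ) : Fin s → Fin s → Fin s → Fin s → ℝ :=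
  fun a b c d =>
    (if a = d then (1 : ℝ) else 0) * (if b = c then (1 : ℝ) else 0) -
      (if a = c then (1 : ℝ) else 0) * (if b = d then (1 : ℝ) else 0)

/-- The tensor of Lemma 2.1: `R(U_a,U_b,U_c,U_d) = R¹_{abcd}`, components with
exactly one `T` index equal `R²_{abcd}` (replacing the `T` index by the
corresponding `U` index), all else zero. -/
def bigR {s : ℕ} (R1 R2 : Fin s → Fin s → Fin s → Fin s → ℝ) :
    BasisIdx s → BasisIdx s → BasisIdx s → BasisIdx s → ℝ :=
  fun x y z w =>
    if x.1 = 0 ∧ y.1 = 0 ∧ z.1 = 0 ∧ w.1 = 0 then R1 x.2 y.2 z.2 w.2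
    else if (x.1 = 2 ∧ y.1 = 0 ∧ z.1 = 0 ∧ w.1 = 0) ∨ (x.1 = 0 ∧ y.1 = 2 ∧ z.1 = 0 ∧ w.1 = 0) ∨
            (x.1 = 0 ∧ y.1 = 0 ∧ z.1 = 2 ∧ w.1 = 0) ∨ (x.1 = 0 ∧ y.1 = 0 ∧ z.1 = 0 ∧ w.1 = 2)
      then R2 x.2 y.2 z.2 w.2
    else 0

/-! `J(X)` maps every vector into `span {V, T}`, maps `span {V, T}` into `span {V}` and kills
`span {V}`: pairing with `V_a` reads off the `U`-coordinates, `R` vanishes once a `V` slot occurs,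
and every nonzero component of `R` has at least three `U` slots. Hence `J(X)³ = 0`.

For `J(X)² ≠ 0`, let `x` be the `U`-part of `X` and `S = |x|²`. Because `R²` has constant
curvature, `g(J(X)² U_e, U_e) = -S (S - x_e²)`; if `J(X)² = 0`, summing over `e` gives
`(s - 1) S² = 0`, so `x = 0` and `g(X, X) = -|X_T|² ≤ 0`, contradicting `g(X, X) = 1`. -/

namespace NilpotentJacobi

variable {s : ℕ}

def uPart (v : BasisIdx s → ℝ) : Fin s → ℝ := fun a => v (0, a)

def vPart (v : BasisIdx s → ℝ) : Fin s → ℝ := fun a => v (1, a)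

def tPart (v : BasisIdx s → ℝ) : Fin s → ℝ := fun a => v (2, a)

lemma eq_zero_of_parts_eq_zero {v : BasisIdx s → ℝ} (hU : uPart v = 0) (hV : vPart v = 0)
    (hT : tPart v = 0) : v = 0 := by
  funext ⟨i, a⟩
  fin_cases i
  exacts [congrFun hU a, congrFun hV a, congrFun hT a]

def jacobiForm (R : Fin s → Fin s → Fin s → Fin s → ℝ) (x u : Fin s → ℝ) : Fin s → ℝ :=
  fun d => ∑ a, ∑ b, ∑ c, u a * x b * x c * R a b c d

def IsJacobiOperator (gm : Fin s → Fin s → ℝ)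
    (R : BasisIdx s → BasisIdx s → BasisIdx s → BasisIdx s → ℝ) (X : BasisIdx s → ℝ)
    (J : Module.End ℝ (BasisIdx s → ℝ)) : Prop :=
  ∀ y z, gBil gm (J y) z = ext R y X X z

lemma uPart_Uvec (e : Fin s) : uPart (Uvec e) = Pi.single e 1 := by
  ext a
  simp [uPart, Uvec, Pi.single_apply]

@[simp]
lemma jacobiForm_zero (R : Fin s → Fin s → Fin s → Fin s → ℝ) (x : Fin s → ℝ) :
    jacobiForm R x 0 = 0 := by
  ext d
  simp [jacobiForm]

lemma jacobiForm_R2const (x u : Fin s → ℝ) :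
    jacobiForm (R2const s) x u = (x ⬝ᵥ x) • u - (u ⬝ᵥ x) • x := by
  ext d
  simp only [jacobiForm, R2const, mul_ite, mul_one, mul_zero, mul_sub, Finset.sum_sub_distrib,
    Finset.sum_ite_eq, Finset.mem_univ, ↓reduceIte, Finset.sum_ite_irrel, Finset.sum_const_zero,
    Finset.sum_ite_eq', dotProduct, Pi.sub_apply, Pi.smul_apply, smul_eq_mul, Finset.sum_mul]
  congr 1 <;> exact Finset.sum_congr rfl fun _ _ => by ring

lemma eq_zero_of_forall_dotProduct_self_mul_sub (hs : 2 ≤ s) {x : Fin s → ℝ}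
    (h : ∀ e, (x ⬝ᵥ x) * (x ⬝ᵥ x - x e * x e) = 0) : x = 0 := by
  have hsum : (x ⬝ᵥ x) * ((s - 1) * (x ⬝ᵥ x)) = 0 := by
    have := Finset.sum_eq_zero fun e (_ : e ∈ Finset.univ) => h e
    rw [← Finset.mul_sum, Finset.sum_sub_distrib] at this
    simpa [dotProduct, sub_mul] using this
  have hs1 : (s - 1 : ℝ) ≠ 0 := by
    have : (2 : ℝ) ≤ s := by exact_mod_cast hs
    linarith
  simpa [hs1] using hsum

lemma gBil_Vvec (gm : Fin s → Fin s → ℝ) (w : BasisIdx s → ℝ) (a : Fin s) :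
    gBil gm w (Vvec a) = uPart w a := by
  simp [uPart, gBil, Vvec, Pi.single_apply, Gmat, Fintype.sum_prod_type]

lemma gBil_Tvec (gm : Fin s → Fin s → ℝ) (w : BasisIdx s → ℝ) (a : Fin s) :
    gBil gm w (Tvec a) = -tPart w a := by
  simp [tPart, gBil, Tvec, Pi.single_apply, Gmat, Fintype.sum_prod_type]

lemma gBil_Uvec (gm : Fin s → Fin s → ℝ) (w : BasisIdx s → ℝ) (d : Fin s) :
    gBil gm w (Uvec d) = ∑ a, uPart w a * gm a d + vPart w d := by
  simp [uPart, vPart, gBil, Uvec, Pi.single_apply, Gmat, Fintype.sum_prod_type, Fin.sum_univ_three]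

@[simp]
lemma gBil_zero_left (gm : Fin s → Fin s → ℝ) (w : BasisIdx s → ℝ) : gBil gm 0 w = 0 := by
  simp [gBil]

lemma gBil_self_of_uPart_eq_zero (gm : Fin s → Fin s → ℝ) {X : BasisIdx s → ℝ}
    (hX : uPart X = 0) : gBil gm X X = -(tPart X ⬝ᵥ tPart X) := by
  have hX' : ∀ a, X (0, a) = 0 := fun a => congrFun hX a
  simp [gBil, Gmat, Fintype.sum_prod_type, Fin.sum_univ_three, hX', dotProduct, tPart]

section bigR

variable (R1 R2 : Fin s → Fin s → Fin s → Fin s → ℝ)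

lemma ext_bigR_Vvec (x y z : BasisIdx s → ℝ) (a : Fin s) :
    ext (bigR R1 R2) x y z (Vvec a) = 0 := by
  simp [ext, Vvec, Pi.single_apply, bigR, Fintype.sum_prod_type, Fin.sum_univ_three]

lemma ext_bigR_Tvec (y X : BasisIdx s → ℝ) (d : Fin s) :
    ext (bigR R1 R2) y X X (Tvec d) = jacobiForm R2 (uPart X) (uPart y) d := by
  simp [ext, Tvec, Pi.single_apply, bigR, Fintype.sum_prod_type, Fin.sum_univ_three, jacobiForm,
    uPart]

lemma ext_bigR_Uvec_of_uPart_eq_zero {y : BasisIdx s → ℝ} (X : BasisIdx s → ℝ)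
    (hy : uPart y = 0) (d : Fin s) :
    ext (bigR R1 R2) y X X (Uvec d) = jacobiForm R2 (uPart X) (tPart y) d := by
  have hy' : ∀ a, y (0, a) = 0 := fun a => congrFun hy a
  simp [ext, Uvec, Pi.single_apply, bigR, Fintype.sum_prod_type, Fin.sum_univ_three, jacobiForm,
    uPart, tPart, hy']

end bigR

namespace IsJacobiOperator

variable {gm : Fin s → Fin s → ℝ} {R1 R2 : Fin s → Fin s → Fin s → Fin s → ℝ}
  {X : BasisIdx s → ℝ} {J : Module.End ℝ (BasisIdx s → ℝ)}

lemma uPart_apply (hJ : IsJacobiOperator gm (bigR R1 R2) X J) (y : BasisIdx s → ℝ) :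
    uPart (J y) = 0 :=
  funext fun a => by simpa [gBil_Vvec, ext_bigR_Vvec] using hJ y (Vvec a)

lemma tPart_apply (hJ : IsJacobiOperator gm (bigR R1 R2) X J) (y : BasisIdx s → ℝ) :
    tPart (J y) = -jacobiForm R2 (uPart X) (uPart y) :=
  funext fun d => by
    have h := hJ y (Tvec d)
    rw [gBil_Tvec, ext_bigR_Tvec] at h
    simp [← h]

lemma tPart_apply_apply (hJ : IsJacobiOperator gm (bigR R1 R2) X J) (y : BasisIdx s → ℝ) :
    tPart (J (J y)) = 0 := by
  rw [hJ.tPart_apply, hJ.uPart_apply, jacobiForm_zero, neg_zero]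

lemma gBil_apply_Uvec_of_uPart_eq_zero (hJ : IsJacobiOperator gm (bigR R1 R2) X J)
    {y : BasisIdx s → ℝ} (hy : uPart y = 0) (d : Fin s) :
    gBil gm (J y) (Uvec d) = jacobiForm R2 (uPart X) (tPart y) d := by
  rw [hJ y, ext_bigR_Uvec_of_uPart_eq_zero _ _ _ hy]

lemma pow_three_eq_zero (hJ : IsJacobiOperator gm (bigR R1 R2) X J) : J ^ 3 = 0 := by
  refine LinearMap.ext fun y => ?_
  have hU : uPart (J (J (J y))) = 0 := hJ.uPart_apply _
  have hV : vPart (J (J (J y))) = 0 := funext fun a => by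
    have h := hJ.gBil_apply_Uvec_of_uPart_eq_zero (hJ.uPart_apply (J y)) a
    simpa [gBil_Uvec, hU, hJ.tPart_apply_apply] using h
  simpa [pow_succ] using eq_zero_of_parts_eq_zero hU hV (hJ.tPart_apply_apply (J y))

lemma tPart_apply_Uvec (hJ : IsJacobiOperator gm (bigR R1 (R2const s)) X J) (e : Fin s) :
    tPart (J (Uvec e)) = uPart X e • uPart X - (uPart X ⬝ᵥ uPart X) • Pi.single e 1 := by
  rw [hJ.tPart_apply, uPart_Uvec, jacobiForm_R2const, single_dotProduct, one_mul, neg_sub]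

lemma gBil_sq_Uvec_self (hJ : IsJacobiOperator gm (bigR R1 (R2const s)) X J) (e : Fin s) :
    gBil gm (J (J (Uvec e))) (Uvec e) =
      -((uPart X ⬝ᵥ uPart X) * (uPart X ⬝ᵥ uPart X - uPart X e * uPart X e)) := by
  rw [hJ.gBil_apply_Uvec_of_uPart_eq_zero (hJ.uPart_apply _), hJ.tPart_apply_Uvec,
    jacobiForm_R2const]
  simp only [sub_dotProduct, smul_dotProduct, smul_eq_mul, single_dotProduct, one_mul,
    Pi.sub_apply, Pi.smul_apply, Pi.single_eq_same, mul_one]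
  ring

lemma uPart_eq_zero_of_sq_eq_zero (hs : 2 ≤ s)
    (hJ : IsJacobiOperator gm (bigR R1 (R2const s)) X J) (hJ2 : J ^ 2 = 0) : uPart X = 0 :=
  eq_zero_of_forall_dotProduct_self_mul_sub hs fun e => by
    have hJJ : J (J (Uvec e)) = 0 := by simpa [sq] using LinearMap.congr_fun hJ2 (Uvec e)
    simpa [hJJ] using hJ.gBil_sq_Uvec_self e

end IsJacobiOperator

end NilpotentJacobi

open NilpotentJacobi

theorem stmt5_general (s : ℕ) (hs : 2 ≤ s) (gm : Fin s → Fin s → ℝ)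
    (R1 : Fin s → Fin s → Fin s → Fin s → ℝ)
    (X : BasisIdx s → ℝ) (hX : gBil gm X X = 1)
    (J : Module.End ℝ (BasisIdx s → ℝ))
    (hJ : ∀ y z, gBil gm (J y) z = ext (bigR R1 (R2const s)) y X X z) :
    J ^ 3 = 0 ∧ J ^ 2 ≠ 0 := by
  refine ⟨IsJacobiOperator.pow_three_eq_zero hJ, fun hJ2 => ?_⟩
  have hXU := IsJacobiOperator.uPart_eq_zero_of_sq_eq_zero hs hJ hJ2
  have hT : 0 ≤ tPart X ⬝ᵥ tPart X := Fintype.sum_nonneg fun _ => mul_self_nonneg _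
  linarith [gBil_self_of_uPart_eq_zero gm hXU]

/-- for the curvature tensor `R = R(R¹, R²)` of Lemma 2.1 with
`R²` the constant sectional curvature `+1` tensor and `s ≥ 2`, the Jacobi
operator `J(X)` of any spacelike unit vector `X` (characterized by
`g(J(X)y, z) = R(y, X, X, z)`) satisfies `J(X)³ = 0` and `J(X)² ≠ 0`:
`R` is nilpotent of order exactly `3` on spacelike vectors. -/
theorem stmt5 (s : ℕ) (hs : 2 ≤ s) (gm : Fin s → Fin s → ℝ)
    (hgm : ∀ a b, gm a b = gm b a)
    (R1 : Fin s → Fin s → Fin s → Fin s → ℝ) (h1 : IsACT R1)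
    (X : BasisIdx s → ℝ) (hX : gBil gm X X = 1)
    (J : Module.End ℝ (BasisIdx s → ℝ))
    (hJ : ∀ y z, gBil gm (J y) z = ext (bigR R1 (R2const s)) y X X z) :
    J ^ 3 = 0 ∧ J ^ 2 ≠ 0 :=
  stmt5_general s hs gm R1 X hX J hJ
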